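/- arXiv:1301.0875 — 2 statements merged into one kernel-verified Lean document; each statement's English description precedes it below -/
import Mathlib

section
/- Suppose e : [t₀, ∞) → ℝᵐ satisfies e(t₀) = 0 and ‖e(t)‖ ≤ (P/L)(exp(L(t − t₀)) − 1) for constants L, P > 0. If Δ > 0, then any time t* ≥ t₀ at which ‖e(t*)‖ ≥ Δ satisfies t* − t₀ ≥ (1/L)·log(1 + LΔ/P). In particular, the inter-execution time is bounded below by the positive constant (1/L)·log(1 + LΔ/P). -/
theorem stmt4 {m : ℕ} (e : ℝ → EuclideanSpace ℝ (Fin m)) (t₀ L P Δ : ℝ)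
    (hL : 0 < L) (hP : 0 < P) (hΔ : 0 < Δ)
    (h0 : e t₀ = 0)
    (hbound : ∀ t, t₀ ≤ t → ‖e t‖ ≤ (P / L) * (Real.exp (L * (t - t₀)) - 1)) :
    ∀ tstar, t₀ ≤ tstar → Δ ≤ ‖e tstar‖ →
      (1 / L) * Real.log (1 + L * Δ / P) ≤ tstar - t₀ := by
  intro tstar ht hΔe
  have h1 : Δ ≤ (P / L) * (Real.exp (L * (tstar - t₀)) - 1) :=
    hΔe.trans (hbound tstar ht)
  have h2 : 1 + L * Δ / P ≤ Real.exp (L * (tstar - t₀)) := by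
    rw [div_mul_eq_mul_div, le_div_iff₀ hL, mul_comm] at h1
    rw [add_comm, div_add' _ _ _ hP.ne', div_le_iff₀ hP]
    nlinarith
  have h3 : Real.log (1 + L * Δ / P) ≤ L * (tstar - t₀) := by
    calc Real.log (1 + L * Δ / P) ≤ Real.log (Real.exp (L * (tstar - t₀))) :=
          Real.log_le_log (by positivity) h2
      _ = L * (tstar - t₀) := Real.log_exp _
  rw [one_div, inv_mul_le_iff₀ hL]
  linarith
end

section
/- Let e : [t₀, ∞) → ℝᵐ satisfy e(t₀) = 0 and ‖e(t)‖ ≤ (P/L)(exp(L(t−t₀)) − 1) + ⌈(t−t₀)/T_v⌉·J_v with L, P > 0, T_v > 0, J_v ≥ 0, and let Δ > 0 satisfy Δ − J_v > 0 (so N = ⌊Δ/J_v⌋ ≥ 1 when J_v > 0). For each integer k with 1 ≤ k ≤ N, let T_k = (1/L)·log(1 + L(Δ − k·J_v)/P). Then any time t* with ‖e(t*)‖ ≥ Δ satisfies t* − t₀ ≥ max over 1 ≤ k ≤ N of min{k·T_v, T_k}, and this bound is strictly positive. -/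
/-!
Before time `k * Tv` at most `k` jumps have occurred, contributing at most `k * Jv` to the
error, and before time `T_k` the continuous part `(P / L) (exp (L s) - 1)` stays below the
remaining budget `Δ - k * Jv`. So the error cannot reach `Δ` before `min (k * Tv) T_k`, for
every admissible `k`. Positivity comes from `k = 1`.
-/

open Real

lemma ceil_div_mul_le_of_le_mul {s Tv Jv : ℝ} {k : ℕ} (hTv : 0 < Tv) (hJv : 0 ≤ Jv)
    (hs : s ≤ k * Tv) : (⌈s / Tv⌉ : ℝ) * Jv ≤ k * Jv := by
  refine mul_le_mul_of_nonneg_right ?_ hJv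
  exact_mod_cast Int.ceil_le.mpr (by exact_mod_cast (div_le_iff₀ hTv).mpr hs)

lemma lt_one_div_mul_log_iff {L P a s : ℝ} (hL : 0 < L) (hP : 0 < P)
    (ha : 0 < 1 + L * a / P) :
    s < 1 / L * log (1 + L * a / P) ↔ P / L * (exp (L * s) - 1) < a := by
  rw [one_div_mul_eq_div, lt_div_iff₀' hL, lt_log_iff_exp_lt ha, ← sub_lt_iff_lt_add',
    lt_div_iff₀' hP, div_mul_eq_mul_div, div_lt_iff₀ hL, mul_comm a L]

lemma min_le_of_le_exp_add_ceil {L P Tv Jv Δ s : ℝ} {k : ℕ} (hL : 0 < L) (hP : 0 < P)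
    (hTv : 0 < Tv) (hJv : 0 ≤ Jv) (hk : 0 < Δ - k * Jv)
    (hΔ : Δ ≤ P / L * (exp (L * s) - 1) + (⌈s / Tv⌉ : ℝ) * Jv) :
    min (k * Tv) (1 / L * log (1 + L * (Δ - k * Jv) / P)) ≤ s := by
  by_contra! hs
  obtain ⟨hs_jumps, hs_flow⟩ := lt_min_iff.mp hs
  have h_jumps := ceil_div_mul_le_of_le_mul hTv hJv hs_jumps.le
  have h_flow := (lt_one_div_mul_log_iff hL hP (by positivity)).mp hs_flow
  linarith

lemma min_mul_one_div_mul_log_pos {L P Tv a : ℝ} (hL : 0 < L) (hP : 0 < P) (hTv : 0 < Tv)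
    (ha : 0 < a) : 0 < min Tv (1 / L * log (1 + L * a / P)) := by
  have : 0 < log (1 + L * a / P) := log_pos (by linarith [show 0 < L * a / P by positivity])
  exact lt_min hTv (by positivity)

theorem stmt11_general {m : ℕ} (e : ℝ → EuclideanSpace ℝ (Fin m)) (t₀ L P Tv Jv Δ : ℝ)
    (N : ℕ)
    (hL : 0 < L) (hP : 0 < P) (hTv : 0 < Tv) (hJv : 0 ≤ Jv)
    (hN1 : 1 ≤ N)
    (hNk : ∀ k : ℕ, 1 ≤ k → k ≤ N → 0 < Δ - (k : ℝ) * Jv)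
    (hbound : ∀ t, t₀ ≤ t →
      ‖e t‖ ≤ (P / L) * (Real.exp (L * (t - t₀)) - 1) + (⌈(t - t₀) / Tv⌉ : ℝ) * Jv) :
    ∀ tstar, t₀ ≤ tstar → Δ ≤ ‖e tstar‖ →
      (Finset.Icc 1 N).sup' (Finset.nonempty_Icc.mpr hN1)
          (fun k => min ((k : ℝ) * Tv)
            ((1 / L) * Real.log (1 + L * (Δ - (k : ℝ) * Jv) / P)))
        ≤ tstar - t₀ ∧
      0 < (Finset.Icc 1 N).sup' (Finset.nonempty_Icc.mpr hN1)
          (fun k => min ((k : ℝ) * Tv)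
            ((1 / L) * Real.log (1 + L * (Δ - (k : ℝ) * Jv) / P))) := by
  intro tstar htstar hΔ
  constructor
  · refine Finset.sup'_le _ _ fun k hk => ?_
    obtain ⟨hk1, hkN⟩ := Finset.mem_Icc.mp hk
    exact min_le_of_le_exp_add_ceil hL hP hTv hJv (hNk k hk1 hkN)
      (hΔ.trans (hbound tstar htstar))
  · refine (Finset.lt_sup'_iff _).mpr ⟨1, Finset.mem_Icc.mpr ⟨le_rfl, hN1⟩, ?_⟩
    simpa only [Nat.cast_one, one_mul] using
      min_mul_one_div_mul_log_pos hL hP hTv (by simpa using hNk 1 le_rfl hN1)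

theorem stmt11 {m : ℕ} (e : ℝ → EuclideanSpace ℝ (Fin m)) (t₀ L P Tv Jv Δ : ℝ)
    (N : ℕ)
    (hL : 0 < L) (hP : 0 < P) (hTv : 0 < Tv) (hJv : 0 ≤ Jv)
    (hΔJ : 0 < Δ - Jv)
    (hN1 : 1 ≤ N)
    (hNk : ∀ k : ℕ, 1 ≤ k → k ≤ N → 0 < Δ - (k : ℝ) * Jv)
    (h0 : e t₀ = 0)
    (hbound : ∀ t, t₀ ≤ t →
      ‖e t‖ ≤ (P / L) * (Real.exp (L * (t - t₀)) - 1) + (⌈(t - t₀) / Tv⌉ : ℝ) * Jv) :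
    ∀ tstar, t₀ ≤ tstar → Δ ≤ ‖e tstar‖ →
      (Finset.Icc 1 N).sup' (Finset.nonempty_Icc.mpr hN1)
          (fun k => min ((k : ℝ) * Tv)
            ((1 / L) * Real.log (1 + L * (Δ - (k : ℝ) * Jv) / P)))
        ≤ tstar - t₀ ∧
      0 < (Finset.Icc 1 N).sup' (Finset.nonempty_Icc.mpr hN1)
          (fun k => min ((k : ℝ) * Tv)
            ((1 / L) * Real.log (1 + L * (Δ - (k : ℝ) * Jv) / P))) :=
  stmt11_general e t₀ L P Tv Jv Δ N hL hP hTv hJv hN1 hNk hbound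
end
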